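/- Let A be a complex semisimple unital Banach algebra. Suppose that for all a, b ∈ A the following are equivalent: (i) ρ(ax) ≤ ρ(bx) for all x ∈ A; (ii) a = λb for some λ ∈ ℂ with |λ| ≤ 1. Then A is a prime algebra. -/

import Mathlib

open Complex

noncomputable section

/-- The nonzero spectrum `σ'(x) = σ(x) \ {0}` of an element of a complex algebra. -/
def nzSpec {A : Type*} [Ring A] [Algebra ℂ A] (x : A) : Set ℂ :=
  spectrum ℂ x \ {0}

/-- The spectral rank of an element: `rank a = sup_{x ∈ A} #σ'(xa)`, valued in `ℕ∞`. -/
noncomputable def srank {A : Type*} [Ring A] [Algebra ℂ A] (a : A) : ℕ∞ :=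
  ⨆ x : A, (nzSpec (x * a)).encard

/-- The socle of `A`: the set of finite-rank elements. -/
def socle (A : Type*) [Ring A] [Algebra ℂ A] : Set A :=
  {a : A | srank a ≠ ⊤}

/-- `A` is (Jacobson) semisimple: its Jacobson radical is `{0}`. -/
def JacobsonSemisimple (A : Type*) [Ring A] : Prop :=
  TwoSidedIdeal.jacobson (⊥ : TwoSidedIdeal A) = ⊥

/-- `Soc A` is a minimal two-sided ideal: it is a nonzero two-sided ideal containing
no two-sided ideals other than `{0}` and itself. -/
def SocleIsMinimalTwoSidedIdeal (A : Type*) [Ring A] [Algebra ℂ A] : Prop :=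
  ∃ I : TwoSidedIdeal A, (I : Set A) = socle A ∧ I ≠ ⊥ ∧
    ∀ J : TwoSidedIdeal A, J ≤ I → J = ⊥ ∨ J = I

/-- `A` is a prime algebra: all nonzero two-sided ideals `I, J` satisfy `IJ ≠ {0}`. -/
def IsPrimeAlgebra (A : Type*) [Ring A] : Prop :=
  ∀ I J : TwoSidedIdeal A, I ≠ ⊥ → J ≠ ⊥ → ∃ x ∈ I, ∃ y ∈ J, x * y ≠ 0

/-- The left annihilator of the socle equals `{0}`. -/
def LeftAnnSocleTrivial (A : Type*) [Ring A] [Algebra ℂ A] : Prop :=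
  {x : A | ∀ y ∈ socle A, x * y = 0} = {0}

/-!
If `a A b = 0`, then also `b A a = 0`, so `a x` and `b x` are orthogonal for every `x` and the
nonzero spectrum of `b x` lies in that of `(a + b) x`. Hence `ρ(b x) ≤ ρ((a + b) x)`, and the
hypothesis makes `b` a multiple of `a + b`, so `a` is a multiple of `b`. Then `a A a = 0`, and `a = 0`
because an element `c` with `(c x)² = 0` for all `x` satisfies `ρ(c x) ≤ ρ(0 x)`, i.e. `c = λ • 0`.
-/

theorem TwoSidedIdeal.exists_mem_ne_zero_of_ne_bot {R : Type*} [NonUnitalNonAssocRing R]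
    {I : TwoSidedIdeal R} (hI : I ≠ ⊥) : ∃ x ∈ I, x ≠ 0 := by
  by_contra! h
  exact hI (eq_bot_iff.mpr fun x hx => (TwoSidedIdeal.mem_bot R).mpr (h x hx))

section Spectrum

variable {𝕜 A : Type*} [Field 𝕜] [Ring A] [Algebra 𝕜 A]

/-- For `λ ≠ 0` the identity `(λ - u)(λ - v) = λ (λ - (u + v))` between commuting factors shows
that `λ - v` is invertible whenever `λ - (u + v)` is. -/
theorem spectrum_subset_insert_zero_spectrum_add_of_mul_eq_zero {u v : A} (huv : u * v = 0)
    (hvu : v * u = 0) : spectrum 𝕜 v ⊆ insert 0 (spectrum 𝕜 (u + v)) := by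
  intro lam hlam
  by_contra! hmem
  rw [Set.mem_insert_iff, not_or] at hmem
  obtain ⟨hlam0, hlam_res⟩ := hmem
  rw [spectrum.notMem_iff] at hlam_res
  have hcomm : Commute (algebraMap 𝕜 A lam - u) (algebraMap 𝕜 A lam - v) :=
    ((Commute.refl _).sub_right (Algebra.commute_algebraMap_left lam v)).sub_left
      ((Algebra.commute_algebraMap_left lam u).symm.sub_right (huv.trans hvu.symm))
  have hfactor : (algebraMap 𝕜 A lam - u) * (algebraMap 𝕜 A lam - v) =
      algebraMap 𝕜 A lam * (algebraMap 𝕜 A lam - (u + v)) := by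
    rw [sub_mul, mul_sub, mul_sub, huv, ← Algebra.commutes lam u, mul_sub, mul_add, sub_zero]
    abel
  have hunit : IsUnit ((algebraMap 𝕜 A lam - u) * (algebraMap 𝕜 A lam - v)) := by
    rw [hfactor]
    exact ((IsUnit.mk0 lam hlam0).map (algebraMap 𝕜 A)).mul hlam_res
  exact spectrum.notMem_iff.mpr (hcomm.isUnit_mul_iff.mp hunit).2 hlam

end Spectrum

section SpectralRadius

variable {𝕜 A : Type*} [NormedField 𝕜] [Ring A] [Algebra 𝕜 A]

theorem spectralRadius_le_of_subset_insert_zero {a b : A}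
    (h : spectrum 𝕜 a ⊆ insert 0 (spectrum 𝕜 b)) : spectralRadius 𝕜 a ≤ spectralRadius 𝕜 b := by
  refine iSup₂_le fun k hk => ?_
  rcases h hk with rfl | hk
  · simp
  · exact le_iSup₂ (f := fun k (_ : k ∈ spectrum 𝕜 b) => (‖k‖₊ : ENNReal)) k hk

theorem spectralRadius_le_spectralRadius_add_of_mul_eq_zero {u v : A} (huv : u * v = 0)
    (hvu : v * u = 0) : spectralRadius 𝕜 v ≤ spectralRadius 𝕜 (u + v) :=
  spectralRadius_le_of_subset_insert_zero
    (spectrum_subset_insert_zero_spectrum_add_of_mul_eq_zero huv hvu)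

end SpectralRadius

theorem forall_mul_mul_eq_zero_comm {R : Type*} [Ring R]
    (hsemiprime : ∀ c : R, (∀ x, c * x * c = 0) → c = 0) {a b : R}
    (hab : ∀ x, a * x * b = 0) (y : R) : b * y * a = 0 :=
  hsemiprime _ fun x => by
    calc b * y * a * x * (b * y * a) = b * y * ((a * x * b) * y * a) := by noncomm_ring
      _ = 0 := by rw [hab, zero_mul, zero_mul, mul_zero]

section Domination

variable {𝕜 A : Type*} [NormedField 𝕜] [Ring A] [Algebra 𝕜 A]
  (hdom : ∀ a b : A, (∀ x, spectralRadius 𝕜 (a * x) ≤ spectralRadius 𝕜 (b * x)) →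
    ∃ lam : 𝕜, a = lam • b)
include hdom

theorem eq_zero_of_forall_mul_mul_self_eq_zero {c : A} (hc : ∀ x, c * x * (c * x) = 0) :
    c = 0 := by
  obtain ⟨lam, hlam⟩ := hdom c 0 fun x => by
    rw [zero_mul, ← neg_add_cancel (c * x)]
    exact spectralRadius_le_spectralRadius_add_of_mul_eq_zero
      (by rw [neg_mul, hc, neg_zero]) (by rw [mul_neg, hc, neg_zero])
  simpa using hlam

theorem eq_zero_of_forall_mul_mul_eq_zero_self {c : A} (hc : ∀ x, c * x * c = 0) : c = 0 :=
  eq_zero_of_forall_mul_mul_self_eq_zero hdom fun x => by rw [← mul_assoc, hc, zero_mul]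

theorem eq_zero_or_eq_zero_of_forall_mul_mul_eq_zero {a b : A} (hab : ∀ x, a * x * b = 0) :
    a = 0 ∨ b = 0 := by
  have hba := forall_mul_mul_eq_zero_comm (fun _ => eq_zero_of_forall_mul_mul_eq_zero_self hdom)
    hab
  obtain ⟨lam, hlam⟩ := hdom b (a + b) fun x => by
    rw [add_mul]
    exact spectralRadius_le_spectralRadius_add_of_mul_eq_zero
      (by rw [← mul_assoc, hab, zero_mul]) (by rw [← mul_assoc, hba, zero_mul])
  by_cases hlam0 : lam = 0
  · exact Or.inr (by rw [hlam, hlam0, zero_smul])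
  have ha : a = (lam⁻¹ - 1) • b := by
    rw [sub_smul, one_smul, eq_sub_iff_add_eq]
    conv_rhs => rw [hlam, smul_smul, inv_mul_cancel₀ hlam0, one_smul]
  refine Or.inl (eq_zero_of_forall_mul_mul_eq_zero_self hdom fun x => ?_)
  calc a * x * a = a * x * ((lam⁻¹ - 1) • b) := by rw [← ha]
    _ = 0 := by rw [mul_smul_comm, hab, smul_zero]

end Domination

theorem prime_of_spectralRadius_domination_general
    {A : Type*} [NormedRing A] [NormedAlgebra ℂ A]
    (h : ∀ a b : A,
      ((∀ x : A, spectralRadius ℂ (a * x) ≤ spectralRadius ℂ (b * x)) ↔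
        ∃ lam : ℂ, ‖lam‖ ≤ 1 ∧ a = lam • b)) :
    IsPrimeAlgebra A := by
  have hdom : ∀ a b : A, (∀ x, spectralRadius ℂ (a * x) ≤ spectralRadius ℂ (b * x)) →
      ∃ lam : ℂ, a = lam • b :=
    fun a b hab => ((h a b).mp hab).imp fun _ => And.right
  intro I J hI hJ
  obtain ⟨a, haI, ha0⟩ := I.exists_mem_ne_zero_of_ne_bot hI
  obtain ⟨b, hbJ, hb0⟩ := J.exists_mem_ne_zero_of_ne_bot hJ
  by_contra! hIJ
  have hab : ∀ x, a * x * b = 0 := fun x => by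
    simpa [mul_assoc] using hIJ a haI (x * b) (J.mul_mem_left x b hbJ)
  rcases eq_zero_or_eq_zero_of_forall_mul_mul_eq_zero hdom hab with rfl | rfl <;> contradiction

theorem prime_of_spectralRadius_domination
    {A : Type*} [NormedRing A] [NormOneClass A] [NormedAlgebra ℂ A] [CompleteSpace A]
    (hss : JacobsonSemisimple A)
    (h : ∀ a b : A,
      ((∀ x : A, spectralRadius ℂ (a * x) ≤ spectralRadius ℂ (b * x)) ↔
        ∃ lam : ℂ, ‖lam‖ ≤ 1 ∧ a = lam • b)) :
    IsPrimeAlgebra A :=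
  prime_of_spectralRadius_domination_general h
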